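/- In the formal division g = Σ h_i f_i + r(g) of a power series g by f_1,…,f_k with initial exponents α_i of the diagram, if additionally ord(f_i) = |α_i| for all i, then ord(r(g)) ≥ ord(g) and ord(h_i) ≥ ord(g) − |α_i|. -/

import Mathlib

/-- The value `T̄(a) ∈ ℝ^r` of the tuple of linear forms with coefficient
matrix `c` at `a ∈ ℕ^n`. -/
def tvec {n r : ℕ} (c : Fin r → Fin n → ℝ) (a : Fin n →₀ ℕ) : Fin r → ℝ :=
  fun i => ∑ j, c i j * (a j : ℝ)

/-- The translated quadrant `v + ℕ^n`. -/
def quad {n : ℕ} (v : Fin n →₀ ℕ) : Set (Fin n →₀ ℕ) := {b | ∃ g, b = v + g}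

/-- `Δ_i = (α_i + ℕ^n) \ ⋃_{j<i} (α_j + ℕ^n)`. -/
def deltaI {n k : ℕ} (α : Fin k → (Fin n →₀ ℕ)) (i : Fin k) : Set (Fin n →₀ ℕ) :=
  quad (α i) \ ⋃ (j : Fin k) (_ : j < i), quad (α j)

/-- `Γ = ℕ^n \ ⋃_i (α_i + ℕ^n)`. -/
def gammaSet {n k : ℕ} (α : Fin k → (Fin n →₀ ℕ)) : Set (Fin n →₀ ℕ) :=
  (⋃ i : Fin k, quad (α i))ᶜ

/-- `Γ_i = Δ_i − α_i`. -/
def gammaI {n k : ℕ} (α : Fin k → (Fin n →₀ ℕ)) (i : Fin k) : Set (Fin n →₀ ℕ) :=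
  {g | α i + g ∈ deltaI α i}

/-- The total degree `|a| = a_1 + … + a_n` of an exponent. -/
def degE {n : ℕ} (a : Fin n →₀ ℕ) : ℕ := a.sum fun _ e => e

/-- The order `ord(f)` of a formal power series: the minimum of `|a|` over the
support of `f` (equal to `⊤` for `f = 0`), as an element of `ℕ∞`. -/
noncomputable def ordF {K : Type*} [Field K] {n : ℕ}
    (f : MvPowerSeries (Fin n) K) : ℕ∞ :=
  ⨅ (d : Fin n →₀ ℕ) (_ : MvPowerSeries.coeff d f ≠ 0), (degE d : ℕ∞)

/-!
Let `δ` be an exponent of least total degree in `supp r ∪ ⋃ᵢ (αᵢ + supp hᵢ)`, and the least one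
for the monomial order among those. A product of a term `e` of `hᵢ` with a term `b ≠ αᵢ` of `fᵢ`
cannot land on `δ`: since `|b| ≥ ord fᵢ = |αᵢ|`, the exponent `αᵢ + e` would be a candidate of the
same degree that is smaller than `e + b = δ`. Hence the coefficient of `hᵢ fᵢ` at `δ` only
involves the initial term of `fᵢ`, and a nonzero one places `δ` in `Δᵢ`. As `Δ₁, …, Δₖ, Γ` are
disjoint, exactly one summand of `Σ hᵢ fᵢ + r` contributes at `δ`, so `ord g ≤ |δ|`, which is at
most `ord r` and every `ord hᵢ + |αᵢ|`.
-/

open MvPowerSeries Finset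

theorem MvPowerSeries.coeff_mul_eq_ite_of_forall {σ R : Type*} [DecidableEq σ] [Semiring R]
    (φ ψ : MvPowerSeries σ R) {δ a : σ →₀ ℕ}
    (H : ∀ x ∈ antidiagonal δ, coeff x.1 φ * coeff x.2 ψ ≠ 0 → x.2 = a) :
    coeff δ (φ * ψ) = if a ≤ δ then coeff (δ - a) φ * coeff a ψ else 0 := by
  rw [coeff_mul]
  split_ifs with ha
  · refine sum_eq_single (δ - a, a) (fun x hx hxa => by_contra fun hne => hxa ?_) fun hn =>
      absurd (mem_antidiagonal.2 (tsub_add_cancel_of_le ha)) hn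
    have h2 := H x hx hne
    have h1 : x.1 = δ - a := by rw [← mem_antidiagonal.1 hx, h2, add_tsub_cancel_right]
    exact Prod.ext h1 h2
  · refine sum_eq_zero fun x hx => by_contra fun hne => ha ?_
    rw [← H x hx hne, ← mem_antidiagonal.1 hx]
    exact le_add_self

section Diagram

variable {n k : ℕ} (α : Fin k → (Fin n →₀ ℕ))

theorem notMem_gammaSet_of_mem_deltaI {i : Fin k} {d : Fin n →₀ ℕ} (hd : d ∈ deltaI α i) :
    d ∉ gammaSet α :=
  fun hΓ => hΓ (Set.mem_iUnion.2 ⟨i, hd.1⟩)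

theorem eq_of_mem_deltaI_of_mem_deltaI {i j : Fin k} {d : Fin n →₀ ℕ} (hi : d ∈ deltaI α i)
    (hj : d ∈ deltaI α j) : i = j := by
  rcases lt_trichotomy i j with hij | hij | hij
  · exact absurd (Set.mem_iUnion₂.2 ⟨i, hij, hi.1⟩) hj.2
  · exact hij
  · exact absurd (Set.mem_iUnion₂.2 ⟨j, hij, hj.1⟩) hi.2

end Diagram

theorem degE_eq_degree {n : ℕ} (a : Fin n →₀ ℕ) : degE a = a.degree := rfl

theorem degE_add {n : ℕ} (a b : Fin n →₀ ℕ) : degE (a + b) = degE a + degE b := by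
  simp only [degE_eq_degree, map_add]

theorem exists_mem_degE_min_key_min {n : ℕ} {β : Type*} [LinearOrder β]
    (key : (Fin n →₀ ℕ) → β) {S : Set (Fin n →₀ ℕ)} (hS : S.Nonempty) :
    ∃ δ ∈ S, ∀ d ∈ S, degE δ ≤ degE d ∧ (degE d = degE δ → key δ ≤ key d) := by
  have hM : sInf (degE '' S) ∈ degE '' S := Nat.sInf_mem (hS.image _)
  have hfin : {d ∈ S | degE d = sInf (degE '' S)}.Finite :=
    (Finsupp.finite_of_degree_eq _).subset fun d hd => hd.2
  obtain ⟨δ, ⟨hδS, hδM⟩, hδ⟩ := Set.exists_min_image _ key hfin (by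
    obtain ⟨d, hd, hdM⟩ := hM
    exact ⟨d, hd, hdM⟩)
  exact ⟨δ, hδS, fun d hd =>
    ⟨hδM ▸ Nat.sInf_le ⟨d, hd, rfl⟩, fun hdeg => hδ d ⟨hd, hdeg.trans hδM⟩⟩⟩

theorem tvec_add {n r : ℕ} (c : Fin r → Fin n → ℝ) (a b : Fin n →₀ ℕ) :
    tvec c (a + b) = tvec c a + tvec c b := by
  funext i
  simp only [tvec, Pi.add_apply, Finsupp.add_apply, Nat.cast_add, mul_add, sum_add_distrib]

theorem toLex_tvec_add_lt_add_right {n r : ℕ} (c : Fin r → Fin n → ℝ) (a : Fin n →₀ ℕ)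
    {b b' : Fin n →₀ ℕ} (h : toLex (tvec c b) < toLex (tvec c b')) :
    toLex (tvec c (b + a)) < toLex (tvec c (b' + a)) := by
  rw [tvec_add, tvec_add]
  exact add_lt_add_left h (toLex (tvec c a))

section Order

variable {K : Type*} [Field K] {n : ℕ}

theorem ordF_le {f : MvPowerSeries (Fin n) K} {d : Fin n →₀ ℕ} (hd : coeff d f ≠ 0) :
    ordF f ≤ degE d :=
  iInf₂_le d hd

theorem le_ordF {f : MvPowerSeries (Fin n) K} {m : ℕ∞}
    (H : ∀ d, coeff d f ≠ 0 → m ≤ degE d) : m ≤ ordF f :=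
  le_iInf₂ H

end Order

section Division

variable {K : Type*} [Field K] {n k r : ℕ} {c : Fin r → Fin n → ℝ}
  {f h : Fin k → MvPowerSeries (Fin n) K} {α : Fin k → (Fin n →₀ ℕ)}
  {rg : MvPowerSeries (Fin n) K}

def divisionSupport (h : Fin k → MvPowerSeries (Fin n) K) (α : Fin k → (Fin n →₀ ℕ))
    (rg : MvPowerSeries (Fin n) K) : Set (Fin n →₀ ℕ) :=
  {d | coeff d rg ≠ 0 ∨ ∃ i e, coeff e (h i) ≠ 0 ∧ d = α i + e}

theorem snd_eq_of_coeff_mul_ne_zero {i : Fin k}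
    (hinit : ∀ b, coeff b (f i) ≠ 0 → b ≠ α i → toLex (tvec c (α i)) < toLex (tvec c b))
    (hord : (degE (α i) : ℕ∞) ≤ ordF (f i)) {δ : Fin n →₀ ℕ}
    (hmin : ∀ d ∈ divisionSupport h α rg,
      degE δ ≤ degE d ∧ (degE d = degE δ → toLex (tvec c δ) ≤ toLex (tvec c d)))
    {x : (Fin n →₀ ℕ) × (Fin n →₀ ℕ)} (hx : x ∈ antidiagonal δ)
    (hne : coeff x.1 (h i) * coeff x.2 (f i) ≠ 0) : x.2 = α i := by
  obtain ⟨he, hb⟩ := mul_ne_zero_iff.1 hne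
  by_contra hba
  have hδ : δ = x.2 + x.1 := by rw [add_comm, mem_antidiagonal.1 hx]
  have hdeg : degE (α i) ≤ degE x.2 := by exact_mod_cast hord.trans (ordF_le hb)
  obtain ⟨hle, hkey⟩ := hmin (α i + x.1) (Or.inr ⟨i, x.1, he, rfl⟩)
  rw [hδ, degE_add, degE_add] at hle
  refine (hkey ?_).not_gt ?_
  · rw [hδ, degE_add, degE_add]
    omega
  · rw [hδ]
    exact toLex_tvec_add_lt_add_right c x.1 (hinit _ hb hba)

theorem coeff_sum_mul_add_ne_zero
    (hexp : ∀ i : Fin k,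
      coeff (α i) (f i) ≠ 0 ∧
      ∀ b : Fin n →₀ ℕ, coeff b (f i) ≠ 0 → b ≠ α i → toLex (tvec c (α i)) < toLex (tvec c b))
    (hord : ∀ i, (degE (α i) : ℕ∞) ≤ ordF (f i))
    (hsupph : ∀ i d, coeff d (h i) ≠ 0 → d ∈ gammaI α i)
    (hsuppr : ∀ d, coeff d rg ≠ 0 → d ∈ gammaSet α)
    {δ : Fin n →₀ ℕ} (hδ : δ ∈ divisionSupport h α rg)
    (hmin : ∀ d ∈ divisionSupport h α rg,
      degE δ ≤ degE d ∧ (degE d = degE δ → toLex (tvec c δ) ≤ toLex (tvec c d))) :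
    coeff δ ((∑ i, h i * f i) + rg) ≠ 0 := by
  have hterm : ∀ i, coeff δ (h i * f i) =
      if α i ≤ δ then coeff (δ - α i) (h i) * coeff (α i) (f i) else 0 := fun i =>
    coeff_mul_eq_ite_of_forall _ _ fun _ hx hne =>
      snd_eq_of_coeff_mul_ne_zero (hexp i).2 (hord i) hmin hx hne
  have hΔ : ∀ i, coeff δ (h i * f i) ≠ 0 → δ ∈ deltaI α i := fun i hne => by
    rw [hterm i] at hne
    split_ifs at hne with hle
    · have hmem : α i + (δ - α i) ∈ deltaI α i := hsupph i _ (left_ne_zero_of_mul hne)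
      rwa [add_tsub_cancel_of_le hle] at hmem
    · exact absurd rfl hne
  rw [map_add, map_sum]
  rcases hδ with hr | ⟨i, e, he, rfl⟩
  · rw [sum_eq_zero fun i _ => by_contra fun hne =>
      notMem_gammaSet_of_mem_deltaI α (hΔ i hne) (hsuppr _ hr), zero_add]
    exact hr
  · have hΔi : α i + e ∈ deltaI α i := hsupph i e he
    have hrg : coeff (α i + e) rg = 0 := by_contra fun hne =>
      notMem_gammaSet_of_mem_deltaI α hΔi (hsuppr _ hne)
    rw [sum_eq_single i (fun j _ hji => by_contra fun hne =>
        hji (eq_of_mem_deltaI_of_mem_deltaI α (hΔ j hne) hΔi)) (by simp),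
      hrg, add_zero, hterm i, if_pos le_self_add, add_tsub_cancel_left]
    exact mul_ne_zero he (hexp i).1

theorem ordF_le_of_mem_divisionSupport
    (hexp : ∀ i : Fin k,
      coeff (α i) (f i) ≠ 0 ∧
      ∀ b : Fin n →₀ ℕ, coeff b (f i) ≠ 0 → b ≠ α i → toLex (tvec c (α i)) < toLex (tvec c b))
    (hord : ∀ i, (degE (α i) : ℕ∞) ≤ ordF (f i))
    (hsupph : ∀ i d, coeff d (h i) ≠ 0 → d ∈ gammaI α i)
    (hsuppr : ∀ d, coeff d rg ≠ 0 → d ∈ gammaSet α)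
    {d : Fin n →₀ ℕ} (hd : d ∈ divisionSupport h α rg) :
    ordF ((∑ i, h i * f i) + rg) ≤ degE d := by
  obtain ⟨δ, hδ, hmin⟩ := exists_mem_degE_min_key_min (fun d => toLex (tvec c d)) ⟨d, hd⟩
  calc ordF ((∑ i, h i * f i) + rg) ≤ degE δ :=
        ordF_le (coeff_sum_mul_add_ne_zero hexp hord hsupph hsuppr hδ hmin)
    _ ≤ degE d := by exact_mod_cast (hmin d hd).1

end Division

theorem formal_division_order_bounds_general {K : Type*} [Field K] {n k r : ℕ}
    (c : Fin (r + 1) → Fin n → ℝ)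
    (f : Fin k → MvPowerSeries (Fin n) K)
    (α : Fin k → (Fin n →₀ ℕ))
    (hexp : ∀ i : Fin k,
      MvPowerSeries.coeff (α i) (f i) ≠ 0 ∧
      ∀ b : Fin n →₀ ℕ, MvPowerSeries.coeff b (f i) ≠ 0 → b ≠ α i →
        toLex (tvec c (α i)) < toLex (tvec c b))
    (hord : ∀ i, ordF (f i) = (degE (α i) : ℕ∞))
    (g : MvPowerSeries (Fin n) K)
    (h : Fin k → MvPowerSeries (Fin n) K) (rg : MvPowerSeries (Fin n) K)
    (hsupph : ∀ i : Fin k, ∀ d, MvPowerSeries.coeff d (h i) ≠ 0 →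
      d ∈ gammaI α i)
    (hsuppr : ∀ d, MvPowerSeries.coeff d rg ≠ 0 → d ∈ gammaSet α)
    (hdiv : g = (∑ i, h i * f i) + rg) :
    ordF g ≤ ordF rg ∧ ∀ i : Fin k, ordF g - (degE (α i) : ℕ∞) ≤ ordF (h i) := by
  have hg : ∀ d ∈ divisionSupport h α rg, ordF g ≤ degE d := fun d hd =>
    hdiv ▸ ordF_le_of_mem_divisionSupport hexp (fun i => (hord i).ge) hsupph hsuppr hd
  refine ⟨le_ordF fun d hd => hg d (Or.inl hd), fun i => le_ordF fun e he => ?_⟩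
  rw [tsub_le_iff_left, ← Nat.cast_add, ← degE_add]
  exact hg _ (Or.inr ⟨i, e, he, rfl⟩)

/-- In the formal division `g = Σ h_i f_i + r(g)` by `f_1,…,f_k` with initial
exponents `α_i` (with respect to a total normalized positive monomial order),
if additionally `ord(f_i) = |α_i|` for all `i`, then `ord(r(g)) ≥ ord(g)` and
`ord(h_i) ≥ ord(g) − |α_i|`. -/
theorem formal_division_order_bounds {K : Type*} [Field K] {n k r : ℕ}
    (c : Fin (r + 1) → Fin n → ℝ)
    (hnorm : ∀ j, c 0 j = 1)
    (hnonneg : ∀ i j, 0 ≤ c i j)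
    (htotal : Function.Injective fun a : Fin n →₀ ℕ => tvec c a)
    (f : Fin k → MvPowerSeries (Fin n) K)
    (α : Fin k → (Fin n →₀ ℕ))
    (hexp : ∀ i : Fin k,
      MvPowerSeries.coeff (α i) (f i) ≠ 0 ∧
      ∀ b : Fin n →₀ ℕ, MvPowerSeries.coeff b (f i) ≠ 0 → b ≠ α i →
        toLex (tvec c (α i)) < toLex (tvec c b))
    (hord : ∀ i, ordF (f i) = (degE (α i) : ℕ∞))
    (g : MvPowerSeries (Fin n) K)
    (h : Fin k → MvPowerSeries (Fin n) K) (rg : MvPowerSeries (Fin n) K)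
    (hsupph : ∀ i : Fin k, ∀ d, MvPowerSeries.coeff d (h i) ≠ 0 →
      d ∈ gammaI α i)
    (hsuppr : ∀ d, MvPowerSeries.coeff d rg ≠ 0 → d ∈ gammaSet α)
    (hdiv : g = (∑ i, h i * f i) + rg) :
    ordF g ≤ ordF rg ∧ ∀ i : Fin k, ordF g - (degE (α i) : ℕ∞) ≤ ordF (h i) :=
  formal_division_order_bounds_general c f α hexp hord g h rg hsupph hsuppr hdiv
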